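/- Let G₁ and G₂ be transition graphs over the same mode set L, each with a unique initial and unique terminal vertex, such that the terminal vertex label of G₁ equals the initial vertex label of G₂. Then G₁ ⪯_id G₁ ⨟ G₂, where id is the identity map on L: every trace of G₁ is a prefix of some trace of the sequential composition G₁ ⨟ G₂. -/

import Mathlib

/-!
A path of `G₁` ends at its unique terminal vertex `v1t`, which `G₁ ⨟ G₂` identifies with the
initial vertex `v2i` of `G₂`. Since `G₂` is finite and acyclic with nonempty edge labels, one can
walk from `v2i` to a terminal vertex of `G₂`; appending that walk to the path gives a path of
`G₁ ⨟ G₂` whose trace extends the given one.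
-/

/-- A transition graph over modes `L` with vertex set `V`: a directed graph with
mode-labeled vertices and real-interval-labeled edges. -/
structure TransitionGraph (L : Type) (V : Type) where
  E : V → V → Prop
  vlab : V → L
  elabel : V → V → Set ℝ

namespace TransitionGraph

variable {L L₁ L₂ L₃ : Type} {V V₁ V₂ V₃ : Type}

/-- An initial vertex has no incoming edges. -/
def IsInit (G : TransitionGraph L V) (v : V) : Prop := ∀ u, ¬ G.E u v

/-- A terminal vertex has no outgoing edges. -/
def IsTerm (G : TransitionGraph L V) (v : V) : Prop := ∀ u, ¬ G.E v u

/-- The graph is a DAG. -/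
def Acyclic (G : TransitionGraph L V) : Prop := ∀ v, ¬ Relation.TransGen G.E v v

/-- Every edge is labeled by a nonempty closed bounded interval of nonnegative reals. -/
def WellLabeled (G : TransitionGraph L V) : Prop :=
  ∀ v u, G.E v u → ∃ a b : ℝ, 0 ≤ a ∧ a ≤ b ∧ G.elabel v u = Set.Icc a b

/-- `Chain G v l` : starting from vertex `v`, the list `l` of (time, vertex) pairs
follows edges of `G` with times in the corresponding edge labels. -/
inductive Chain (G : TransitionGraph L V) : V → List (ℝ × V) → Prop
  | nil (v : V) : Chain G v []
  | cons {v u : V} {t : ℝ} {rest : List (ℝ × V)} :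
      G.E v u → t ∈ G.elabel v u → Chain G u rest → Chain G v ((t, u) :: rest)

/-- Last vertex of a chain starting at `v`. -/
def lastVtx (v : V) (l : List (ℝ × V)) : V := (l.map Prod.snd).getLastD v

/-- A (maximal) path: starts at an initial vertex, follows edges, ends at a terminal vertex. -/
def IsPath (G : TransitionGraph L V) (v : V) (l : List (ℝ × V)) : Prop :=
  G.IsInit v ∧ G.Chain v l ∧ G.IsTerm (lastVtx v l)

/-- A trace: a first mode followed by a list of (switching time, mode) pairs. -/
abbrev TraceT (L : Type) := L × List (ℝ × L)

/-- The trace of a path. -/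
def traceOf (G : TransitionGraph L V) (v : V) (l : List (ℝ × V)) : TraceT L :=
  (G.vlab v, l.map fun p => (p.1, G.vlab p.2))

/-- The set of traces of a transition graph. -/
def Traces (G : TransitionGraph L V) : Set (TraceT L) :=
  {σ | ∃ v l, G.IsPath v l ∧ σ = G.traceOf v l}

/-- Relabeling a trace by a mode map. -/
def mapTrace (f : L₁ → L₂) (σ : TraceT L₁) : TraceT L₂ :=
  (f σ.1, σ.2.map fun p => (p.1, f p.2))

/-- `σ` is a prefix of `σ'` (same first mode, prefix of the switching sequence). -/
def TracePrefix (σ σ' : TraceT L) : Prop := σ.1 = σ'.1 ∧ σ.2 <+: σ'.2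

/-- `G₁ ⪯_lmap G₂`: every trace of `G₁`, relabeled by `lmap`, is a prefix of a trace of `G₂`. -/
def Contained (lmap : L₁ → L₂) (G₁ : TransitionGraph L₁ V₁) (G₂ : TransitionGraph L₂ V₂) : Prop :=
  ∀ σ ∈ G₁.Traces, ∃ σ' ∈ G₂.Traces, TracePrefix (mapTrace lmap σ) σ'

/-- Forward simulation relation from `G₁` to `G₂` with respect to mode map `lmap`. -/
def ForwardSim (lmap : L₁ → L₂) (G₁ : TransitionGraph L₁ V₁) (G₂ : TransitionGraph L₂ V₂)
    (R : V₁ → V₂ → Prop) : Prop :=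
  (∀ v, G₁.IsInit v → ∃ u, G₂.IsInit u ∧ R v u) ∧
  (∀ v u, R v u → lmap (G₁.vlab v) = G₂.vlab u) ∧
  (∀ v v' u, G₁.E v v' → R v u →
    ∃ us : Finset V₂, (∀ u' ∈ us, G₂.E u u' ∧ R v' u') ∧
      G₁.elabel v v' ⊆ ⋃ u' ∈ us, G₂.elabel u u')

/-- `v` is the unique initial vertex of `G`. -/
def UniqueInit (G : TransitionGraph L V) (v : V) : Prop :=
  G.IsInit v ∧ ∀ u, G.IsInit u → u = v

/-- `v` is the unique terminal vertex of `G`. -/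
def UniqueTerm (G : TransitionGraph L V) (v : V) : Prop :=
  G.IsTerm v ∧ ∀ u, G.IsTerm u → u = v

/-- Sequential composition of `G₁` and `G₂`, gluing the terminal vertex `v1t` of `G₁`
to the initial vertex `v2i` of `G₂`. -/
def seqComp (G₁ : TransitionGraph L V₁) (G₂ : TransitionGraph L V₂)
    (v1t : V₁) (v2i : V₂) : TransitionGraph L (V₁ ⊕ {u : V₂ // u ≠ v2i}) where
  E x y :=
    match x, y with
    | Sum.inl v, Sum.inl u => G₁.E v u
    | Sum.inl v, Sum.inr u => v = v1t ∧ G₂.E v2i u.1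
    | Sum.inr _, Sum.inl _ => False
    | Sum.inr v, Sum.inr u => G₂.E v.1 u.1
  vlab x :=
    match x with
    | Sum.inl v => G₁.vlab v
    | Sum.inr u => G₂.vlab u.1
  elabel x y :=
    match x, y with
    | Sum.inl v, Sum.inl u => G₁.elabel v u
    | Sum.inl _, Sum.inr u => G₂.elabel v2i u.1
    | Sum.inr _, Sum.inl _ => ∅
    | Sum.inr v, Sum.inr u => G₂.elabel v.1 u.1

/-- The side conditions under which the sequential composition `G₁ ⨟ G₂` is defined:
unique initial/terminal vertices and matching glue labels. -/
def ComposableAt (G₁ : TransitionGraph L V₁) (G₂ : TransitionGraph L V₂)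
    (v1i v1t : V₁) (v2i v2t : V₂) : Prop :=
  G₁.UniqueInit v1i ∧ G₁.UniqueTerm v1t ∧ G₂.UniqueInit v2i ∧ G₂.UniqueTerm v2t ∧
    G₁.vlab v1t = G₂.vlab v2i

lemma lastVtx_cons (v u : V) (t : ℝ) (l : List (ℝ × V)) :
    lastVtx v ((t, u) :: l) = lastVtx u l :=
  List.getLastD_cons

lemma lastVtx_append (v : V) (l₁ l₂ : List (ℝ × V)) :
    lastVtx v (l₁ ++ l₂) = lastVtx (lastVtx v l₁) l₂ := by
  induction l₁ generalizing v with
  | nil => rfl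
  | cons p l ih => rw [List.cons_append, ← Prod.mk.eta (p := p), lastVtx_cons, lastVtx_cons, ih]

lemma lastVtx_map (f : V₁ → V₂) (v : V₁) (l : List (ℝ × V₁)) :
    lastVtx (f v) (l.map fun p => (p.1, f p.2)) = f (lastVtx v l) := by
  rw [lastVtx, List.map_map,
    show (Prod.snd ∘ fun p : ℝ × V₁ => (p.1, f p.2)) = f ∘ Prod.snd from rfl, ← List.map_map]
  exact List.getLastD_map

lemma Chain.append {G : TransitionGraph L V} {v : V} {l₁ l₂ : List (ℝ × V)}
    (h₁ : G.Chain v l₁) (h₂ : G.Chain (lastVtx v l₁) l₂) : G.Chain v (l₁ ++ l₂) := by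
  induction h₁ with
  | nil v => exact h₂
  | cons he ht _ ih => exact Chain.cons he ht (ih (by rwa [lastVtx_cons] at h₂))

lemma Chain.map {G : TransitionGraph L₁ V₁} {G' : TransitionGraph L₂ V₂} (f : V₁ → V₂)
    (hE : ∀ v u, G.E v u → G'.E (f v) (f u))
    (hlab : ∀ v u, G.E v u → G.elabel v u ⊆ G'.elabel (f v) (f u))
    {v : V₁} {l : List (ℝ × V₁)} (h : G.Chain v l) :
    G'.Chain (f v) (l.map fun p => (p.1, f p.2)) := by
  induction h with
  | nil v => exact Chain.nil _
  | cons he ht _ ih => exact Chain.cons (hE _ _ he) (hlab _ _ he ht) ih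

lemma WellLabeled.elabel_nonempty {G : TransitionGraph L V} (hW : G.WellLabeled) {v u : V}
    (h : G.E v u) : (G.elabel v u).Nonempty := by
  obtain ⟨a, b, -, hab, hlab⟩ := hW v u h
  exact hlab ▸ Set.nonempty_Icc.2 hab

lemma Acyclic.wellFounded_flip [Finite V] {G : TransitionGraph L V} (hA : G.Acyclic) :
    WellFounded (flip G.E) := by
  have : IsTrans V (flip (Relation.TransGen G.E)) := ⟨fun _ _ _ hab hbc => hbc.trans hab⟩
  have : Std.Irrefl (flip (Relation.TransGen G.E)) := ⟨hA⟩
  exact Subrelation.wf (q := flip G.E) (r := flip (Relation.TransGen G.E))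
    (fun h => Relation.TransGen.single h) (Finite.wellFounded_of_trans_of_irrefl _)

lemma exists_chain_isTerm [Finite V] {G : TransitionGraph L V} (hA : G.Acyclic)
    (hne : ∀ v u, G.E v u → (G.elabel v u).Nonempty) (v : V) :
    ∃ l, G.Chain v l ∧ G.IsTerm (lastVtx v l) := by
  induction v using hA.wellFounded_flip.induction with
  | _ v ih =>
    by_cases hterm : G.IsTerm v
    · exact ⟨[], Chain.nil v, hterm⟩
    · obtain ⟨u, hu⟩ := not_forall_not.1 hterm
      obtain ⟨l, hc, ht⟩ := ih u hu
      obtain ⟨t, hlab⟩ := hne v u hu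
      exact ⟨(t, u) :: l, Chain.cons hu hlab hc, by rwa [lastVtx_cons]⟩

section Glue

variable (G₁ : TransitionGraph L V₁) (G₂ : TransitionGraph L V₂) (v1t : V₁) (v2i : V₂)

lemma isInit_seqComp_inl {v : V₁} (hv : G₁.IsInit v) :
    (G₁.seqComp G₂ v1t v2i).IsInit (Sum.inl v) := by
  rintro (u | u)
  · exact hv u
  · exact not_false

variable [DecidableEq V₂]

def glue (u : V₂) : V₁ ⊕ {u : V₂ // u ≠ v2i} :=
  if h : u = v2i then Sum.inl v1t else Sum.inr ⟨u, h⟩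

lemma glue_self : glue v1t v2i v2i = Sum.inl v1t := dif_pos rfl

lemma glue_of_ne {u : V₂} (h : u ≠ v2i) : glue v1t v2i u = Sum.inr ⟨u, h⟩ := dif_neg h

lemma seqComp_E_glue (hI : G₂.IsInit v2i) {w u : V₂} (h : G₂.E w u) :
    (G₁.seqComp G₂ v1t v2i).E (glue v1t v2i w) (glue v1t v2i u) ∧
      G₂.elabel w u = (G₁.seqComp G₂ v1t v2i).elabel (glue v1t v2i w) (glue v1t v2i u) := by
  have hu : u ≠ v2i := by rintro rfl; exact hI w h
  rw [glue_of_ne v1t v2i hu]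
  by_cases hw : w = v2i
  · subst hw
    rw [glue_self]
    exact ⟨⟨rfl, h⟩, rfl⟩
  · rw [glue_of_ne v1t v2i hw]
    exact ⟨h, rfl⟩

lemma isTerm_seqComp_glue (hT₁ : G₁.IsTerm v1t) {w : V₂} (hw : G₂.IsTerm w) :
    (G₁.seqComp G₂ v1t v2i).IsTerm (glue v1t v2i w) := by
  by_cases hwi : w = v2i
  · subst hwi
    rw [glue_self]
    rintro (u | u)
    · exact hT₁ u
    · exact fun h => hw u.1 h.2
  · rw [glue_of_ne v1t v2i hwi]
    rintro (u | u)
    · exact not_false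
    · exact hw u.1

lemma IsPath.seqComp (hI₂ : G₂.IsInit v2i) {v : V₁} {l₁ : List (ℝ × V₁)} (h₁ : G₁.IsPath v l₁)
    (hlast : lastVtx v l₁ = v1t) {l₂ : List (ℝ × V₂)} (hc₂ : G₂.Chain v2i l₂)
    (ht₂ : G₂.IsTerm (lastVtx v2i l₂)) :
    (G₁.seqComp G₂ v1t v2i).IsPath (Sum.inl v)
      ((l₁.map fun p => (p.1, Sum.inl p.2)) ++ l₂.map fun p => (p.1, glue v1t v2i p.2)) := by
  obtain ⟨hinit, hchain, hterm⟩ := h₁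
  have hlast' : lastVtx (Sum.inl v) (l₁.map fun p => (p.1, Sum.inl p.2)) = glue v1t v2i v2i := by
    rw [lastVtx_map, hlast, glue_self]
  refine ⟨isInit_seqComp_inl G₁ G₂ v1t v2i hinit, ?_, ?_⟩
  · refine (hchain.map Sum.inl (fun _ _ h => h) (fun _ _ _ => subset_rfl)).append ?_
    rw [hlast']
    exact hc₂.map _ (fun _ _ h => (seqComp_E_glue G₁ G₂ v1t v2i hI₂ h).1)
      (fun _ _ h => (seqComp_E_glue G₁ G₂ v1t v2i hI₂ h).2.subset)
  · rw [lastVtx_append, hlast', lastVtx_map]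
    exact isTerm_seqComp_glue G₁ G₂ v1t v2i (hlast ▸ hterm) ht₂

end Glue

end TransitionGraph

open TransitionGraph in
theorem contained_seqComp_left_general {L V₁ V₂ : Type} [Fintype V₂]
    (G₁ : TransitionGraph L V₁) (G₂ : TransitionGraph L V₂)
    (hA₂ : G₂.Acyclic) (hW₂ : G₂.WellLabeled)
    (v1i v1t : V₁) (v2i v2t : V₂) (hc : ComposableAt G₁ G₂ v1i v1t v2i v2t) :
    Contained (id : L → L) G₁ (G₁.seqComp G₂ v1t v2i) := by
  classical
  obtain ⟨-, ⟨-, hUT₁⟩, ⟨hI₂, -⟩, -, -⟩ := hc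
  rintro _ ⟨v, l, hpath, rfl⟩
  obtain ⟨l₂, hc₂, ht₂⟩ := exists_chain_isTerm hA₂ (fun _ _ => hW₂.elabel_nonempty) v2i
  refine ⟨_, ⟨Sum.inl v, _, hpath.seqComp G₁ G₂ v1t v2i hI₂ (hUT₁ _ hpath.2.2) hc₂ ht₂, rfl⟩,
    rfl, ?_⟩
  simp only [mapTrace, traceOf, id, List.map_append, List.map_map]
  exact List.prefix_append _ _

open TransitionGraph in
/-- `G₁ ⪯_id G₁ ⨟ G₂`: every trace of `G₁` is a prefix of some trace of the
sequential composition `G₁ ⨟ G₂`. -/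
theorem contained_seqComp_left {L V₁ V₂ : Type} [Fintype V₁] [Fintype V₂]
    (G₁ : TransitionGraph L V₁) (G₂ : TransitionGraph L V₂)
    (hA₁ : G₁.Acyclic) (hA₂ : G₂.Acyclic) (hW₁ : G₁.WellLabeled) (hW₂ : G₂.WellLabeled)
    (v1i v1t : V₁) (v2i v2t : V₂) (hc : ComposableAt G₁ G₂ v1i v1t v2i v2t) :
    Contained (id : L → L) G₁ (G₁.seqComp G₂ v1t v2i) :=
  contained_seqComp_left_general G₁ G₂ hA₂ hW₂ v1i v1t v2i v2t hc
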